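/- arXiv:2003.02660 — 2 statements merged into one kernel-verified Lean document; each statement's English description precedes it below -/
import Mathlib

section
/- Let $W$ be a $(d+1) \times n$ matrix over a field, let $A \subseteq [d+1]$, $B \subseteq [n] \setminus [d+1]$ with $|A| + |B| = d$, and let $b = \max B$. Assume the left $(d+1)\times(d+1)$ block of $W$ is the identity and write $q_J = \det(W^J)$. Then for every $i \in [d+1]$: $\det(W_i^{A \cup B}) = \sum_{j \in [d+1] \setminus (A \cup \{i\})} (-1)^{j + |A \cap [j]|}\, q_{([d+1]\setminus\{j\})\cup\{b\}} \cdot \det(W_i^{(A \cup B \setminus \{b\}) \cup \{j\}})$, where $W_i$ denotes $W$ with row $i$ deleted and $W_i^S$ the submatrix of $W_i$ with columns indexed by $S$. -/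
open Matrix Finset

noncomputable def minor {K : Type*} [Field K] {m n : ℕ}
    (M : Matrix (Fin m) (Fin n) K) (I : Finset (Fin n)) : K :=
  if h : I.card = m then (M.submatrix id (fun k => (I.orderIsoOfFin h k : Fin n))).det
  else 0

private lemma neg_one_pow_congr_aux {K : Type*} [Field K] {u v : ℕ} (h : u % 2 = v % 2) :
    (-1 : K) ^ u = (-1) ^ v := by
  conv_lhs => rw [← Nat.div_add_mod u 2]
  conv_rhs => rw [← Nat.div_add_mod v 2]
  rw [pow_add, pow_add, pow_mul, pow_mul, neg_one_sq, h]
  simp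

private lemma minor_eq_det {K : Type*} [Field K] {m n : ℕ}
    (M : Matrix (Fin m) (Fin n) K) (I : Finset (Fin n)) (h : I.card = m)
    (f : Fin m → Fin n) (hmono : StrictMono f) (hmem : ∀ x, f x ∈ I) :
    minor M I = (M.submatrix id f).det := by
  rw [minor, dif_pos h]
  have hf := Finset.orderEmbOfFin_unique h hmem hmono
  congr 1
  ext r c
  simp [Matrix.submatrix_apply, Finset.coe_orderIsoOfFin_apply, ← hf]

private lemma det_updateColumn_sum'' {K : Type*} [Field K] {m : ℕ} {ι : Type*}
    [DecidableEq ι]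
    (A : Matrix (Fin m) (Fin m) K) (j : Fin m) (s : Finset ι) (c : ι → K)
    (v : ι → Fin m → K) :
    (A.updateCol j (fun r => ∑ k ∈ s, c k * v k r)).det
      = ∑ k ∈ s, c k * (A.updateCol j (v k)).det := by
  induction s using Finset.induction with
  | empty =>
      simp only [Finset.sum_empty]
      exact Matrix.det_eq_zero_of_column_eq_zero j (fun r => Matrix.updateCol_self)
  | insert _ _ hx ih =>
      rename_i x s'
      have hsplit : (fun r => ∑ k ∈ insert x s', c k * v k r)
          = (c x • v x) + fun r => ∑ k ∈ s', c k * v k r := by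
        funext r; simp [Finset.sum_insert hx]
      rw [hsplit, Matrix.det_updateCol_add, Matrix.det_updateCol_smul,
        Finset.sum_insert hx, ih]

/-- the key Laplace-expansion recursion: for `W` a `(d+1) × n` matrix
whose left `(d+1)×(d+1)` block is the identity, `A ⊆ [d+1]`, `B ⊆ [n] \ [d+1]` with
`|A| + |B| = d` and `b = max B`, and any row index `i`,
`det(W_i^{A∪B}) = ∑_{j ∈ [d+1]\(A∪{i})} (-1)^{j+|A∩[j]|} q_{([d+1]\{j})∪{b}} det(W_i^{(A∪B\{b})∪{j}})`
(the paper's row/column indices are one-indexed; here `Fin` indices are zero-indexed,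
so `(-1)^j` becomes `(-1)^{(j:ℕ)+1}`). -/
theorem laplace_recursion
    (K : Type*) [Field K] (d n : ℕ) (hdn : d + 1 ≤ n)
    (W : Matrix (Fin (d + 1)) (Fin n) K)
    (hid : ∀ (i : Fin (d + 1)) (j : Fin n) (hj : (j : ℕ) < d + 1),
      W i j = if (i : ℕ) = (j : ℕ) then 1 else 0)
    (A B : Finset (Fin n))
    (hA : A ⊆ Finset.univ.filter (fun k : Fin n => (k : ℕ) < d + 1))
    (hB : B ⊆ Finset.univ.filter (fun k : Fin n => d + 1 ≤ (k : ℕ)))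
    (hcard : A.card + B.card = d)
    (hBne : B.Nonempty) (b : Fin n) (hbB : b ∈ B) (hbmax : ∀ x ∈ B, x ≤ b)
    (i : Fin (d + 1)) :
    minor (W.submatrix i.succAbove id) (A ∪ B) =
      ∑ j ∈ (Finset.univ.filter (fun k : Fin n => (k : ℕ) < d + 1)) \
          (insert (Fin.castLE hdn i) A),
        (-1 : K) ^ ((j : ℕ) + 1 + (A.filter (· ≤ j)).card) *
          minor W (insert b
            ((Finset.univ.filter (fun k : Fin n => (k : ℕ) < d + 1)).erase j)) *
          minor (W.submatrix i.succAbove id) (insert j ((A ∪ B).erase b)) := by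
  classical
  obtain ⟨e, rfl⟩ : ∃ e, d = e + 1 :=
    ⟨d - 1, by have := Finset.card_pos.mpr hBne; omega⟩
  set P : Finset (Fin n) := Finset.univ.filter (fun k : Fin n => (k : ℕ) < e + 1 + 1)
    with hPdef
  set M : Matrix (Fin (e + 1)) (Fin n) K := W.submatrix i.succAbove id with hMdef
  set S : Finset (Fin n) := A ∪ B with hSdef
  set C : Finset (Fin n) := S.erase b with hCdef
  have hAB : Disjoint A B := by
    rw [Finset.disjoint_left]
    intro x hxA hxB
    have h1 := (Finset.mem_filter.mp (hA hxA)).2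
    have h2 := (Finset.mem_filter.mp (hB hxB)).2
    omega
  have hbv : e + 1 + 1 ≤ (b : ℕ) := (Finset.mem_filter.mp (hB hbB)).2
  have hAv : ∀ x ∈ A, (x : ℕ) < e + 1 + 1 := fun x hx => (Finset.mem_filter.mp (hA hx)).2
  have hBv : ∀ x ∈ B, e + 1 + 1 ≤ (x : ℕ) := fun x hx => (Finset.mem_filter.mp (hB hx)).2
  have hS : S.card = e + 1 := by
    rw [hSdef, Finset.card_union_of_disjoint hAB]; omega
  have hbS : b ∈ S := Finset.mem_union_right _ hbB
  have hC : C.card = e := by rw [hCdef, Finset.card_erase_of_mem hbS, hS]; omega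
  have hCmax : ∀ x ∈ C, x < b := by
    intro x hx
    obtain ⟨hxb, hxS⟩ := Finset.mem_erase.mp hx
    rcases Finset.mem_union.mp hxS with hxA | hxB
    · have := hAv x hxA
      rw [Fin.lt_def]; omega
    · exact lt_of_le_of_ne (hbmax x hxB) hxb
  -- the sorted enumeration of S = C ∪ {b}, with b last
  set g : Fin (e + 1) → Fin n := Fin.snoc (fun c => C.orderEmbOfFin hC c) b with hgdef
  have hgmono : StrictMono g := by
    intro x y hxy
    rcases Fin.eq_castSucc_or_eq_last y with ⟨y', rfl⟩ | rfl
    · obtain ⟨x', rfl⟩ := Fin.exists_castSucc_eq.mpr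
        (Fin.ne_last_of_lt (lt_trans hxy (Fin.castSucc_lt_last y')))
      simp only [hgdef, Fin.snoc_castSucc]
      exact (C.orderEmbOfFin hC).strictMono (Fin.castSucc_lt_castSucc_iff.mp hxy)
    · obtain ⟨x', rfl⟩ := Fin.exists_castSucc_eq.mpr (Fin.ne_last_of_lt hxy)
      simp only [hgdef, Fin.snoc_castSucc, Fin.snoc_last]
      exact hCmax _ (Finset.orderEmbOfFin_mem C hC x')
  have hgmem : ∀ x, g x ∈ S := by
    intro x
    rcases Fin.eq_castSucc_or_eq_last x with ⟨x', rfl⟩ | rfl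
    · simp only [hgdef, Fin.snoc_castSucc]
      exact Finset.erase_subset _ _ (Finset.orderEmbOfFin_mem C hC x')
    · simp only [hgdef, Fin.snoc_last]
      exact hbS
  have hLHS : minor M S = (M.submatrix id g).det := minor_eq_det M S hS g hgmono hgmem
  -- expand the last column
  have hexp : (M.submatrix id g).det
      = ∑ k : Fin (e + 1 + 1), W k b *
          ((M.submatrix id g).updateCol (Fin.last e)
            (fun r => M r (Fin.castLE hdn k))).det := by
    have hcol : (fun r => (M.submatrix id g) r (Fin.last e))
        = fun r => ∑ k : Fin (e + 1 + 1), W k b * M r (Fin.castLE hdn k) := by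
      funext r
      have hrow : ∀ k : Fin (e + 1 + 1),
          M r (Fin.castLE hdn k) = if i.succAbove r = k then 1 else 0 := by
        intro k
        rw [hMdef, Matrix.submatrix_apply, id_eq,
          hid _ _ (by simpa using k.isLt)]
        simp [Fin.val_eq_val]
      simp only [hrow, mul_ite, mul_one, mul_zero]
      have : ∑ k : Fin (e + 1 + 1), (if i.succAbove r = k then W k b else 0)
          = W (i.succAbove r) b := by
        rw [Finset.sum_ite_eq Finset.univ (i.succAbove r) (fun k => W k b),
          if_pos (Finset.mem_univ _)]
      rw [this]
      simp [hgdef, hMdef, Fin.snoc_last]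
    conv_lhs => rw [← Matrix.updateCol_eq_self (M.submatrix id g) (Fin.last e),
      hcol]
    exact det_updateColumn_sum'' (M.submatrix id g) (Fin.last e) Finset.univ
      (fun k => W k b) (fun k r => M r (Fin.castLE hdn k))
  -- terms with k = i or castLE k ∈ A vanish
  have hzero : ∀ k : Fin (e + 1 + 1), (k = i ∨ Fin.castLE hdn k ∈ A) →
      W k b * ((M.submatrix id g).updateCol (Fin.last e)
            (fun r => M r (Fin.castLE hdn k))).det = 0 := by
    intro k hk
    rcases hk with rfl | hkA
    · -- the column is zero
      have hz : ∀ r, M r (Fin.castLE hdn k) = 0 := by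
        intro r
        rw [hMdef, Matrix.submatrix_apply, id_eq, hid _ _ (by simpa using k.isLt)]
        rw [if_neg]
        simp only [Fin.coe_castLE]
        exact fun h => Fin.succAbove_ne k r (Fin.val_injective h)
      rw [Matrix.det_eq_zero_of_column_eq_zero (Fin.last e)
        (fun r => by rw [Matrix.updateCol_self, hz]), mul_zero]
    · -- repeated column
      have hkC : Fin.castLE hdn k ∈ C := by
        refine Finset.mem_erase.mpr ⟨?_, Finset.mem_union_left _ hkA⟩
        intro h
        have := congrArg Fin.val h
        simp only [Fin.coe_castLE] at this
        omega
      obtain ⟨c, hc⟩ : ∃ c, C.orderEmbOfFin hC c = Fin.castLE hdn k := by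
        have := Finset.range_orderEmbOfFin C hC
        have hmem : (Fin.castLE hdn k : Fin n) ∈ Set.range (C.orderEmbOfFin hC) := by
          rw [this]; exact_mod_cast hkC
        exact hmem
      rw [Matrix.det_zero_of_column_eq (Fin.castSucc_lt_last c).ne ?_, mul_zero]
      intro r
      rw [Matrix.updateCol_apply, Matrix.updateCol_apply,
        if_neg (Fin.castSucc_lt_last c).ne, if_pos rfl]
      simp [hgdef, Fin.snoc_castSucc, hc]
  -- the main term computation
  have hterm : ∀ k : Fin (e + 1 + 1), k ≠ i → Fin.castLE hdn k ∉ A →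
      W k b * ((M.submatrix id g).updateCol (Fin.last e)
            (fun r => M r (Fin.castLE hdn k))).det
        = (-1 : K) ^ (((Fin.castLE hdn k : Fin n) : ℕ) + 1 +
              (A.filter (· ≤ Fin.castLE hdn k)).card) *
            minor W (insert b (P.erase (Fin.castLE hdn k))) *
            minor M (insert (Fin.castLE hdn k) C) := by
    intro k hki hkA
    set j : Fin n := Fin.castLE hdn k with hjdef
    have hjval : (j : ℕ) = (k : ℕ) := rfl
    have hjC : j ∉ C := by
      intro h
      rcases Finset.mem_union.mp (Finset.mem_erase.mp h).2 with h1 | h1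
      · exact hkA h1
      · have := hBv _ h1
        have := k.isLt
        rw [hjval] at *
        omega
    have hins : (insert j C).card = e + 1 := by
      rw [Finset.card_insert_of_notMem hjC, hC]
    set fj := (insert j C).orderEmbOfFin hins with hfj
    set p : Fin (e + 1) := ((insert j C).orderIsoOfFin hins).symm
      ⟨j, Finset.mem_insert_self _ _⟩ with hpdef
    have hfp : fj p = j := by
      rw [hfj, ← Finset.coe_orderIsoOfFin_apply, hpdef, OrderIso.apply_symm_apply]
    have hfs : (fun c : Fin e => fj (p.succAbove c)) = fun c => C.orderEmbOfFin hC c := by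
      have hmem : ∀ c : Fin e, fj (p.succAbove c) ∈ C := by
        intro c
        have h1 : fj (p.succAbove c) ∈ insert j C := Finset.orderEmbOfFin_mem _ hins _
        rcases Finset.mem_insert.mp h1 with h2 | h2
        · exact absurd (fj.injective (h2.trans hfp.symm)) (Fin.succAbove_ne p c)
        · exact h2
      exact Finset.orderEmbOfFin_unique hC hmem
        (fj.strictMono.comp (Fin.strictMono_succAbove p))
    set π : Equiv.Perm (Fin (e + 1)) :=
      Fin.revPerm * (Fin.cycleRange p.rev)⁻¹ * Fin.revPerm with hπdef
    have hπlast : π (Fin.last e) = p := by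
      simp only [hπdef, Equiv.Perm.mul_apply, Fin.revPerm_apply, Fin.rev_last]
      rw [Equiv.Perm.inv_def, Fin.cycleRange_symm_zero, Fin.rev_rev]
    have hπcast : ∀ c : Fin e, π c.castSucc = p.succAbove c := by
      intro c
      have h1 : Fin.rev (Fin.castSucc c) = (Fin.rev c).succ := by
        ext
        simp only [Fin.val_rev, Fin.coe_castSucc, Fin.val_succ]
        omega
      simp only [hπdef, Equiv.Perm.mul_apply, Fin.revPerm_apply, h1]
      rw [Equiv.Perm.inv_def, Fin.cycleRange_symm_succ, Fin.rev_succAbove]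
      simp [Fin.rev_rev]
    have hπ : ∀ x, fj (π x)
        = (Fin.snoc (fun c : Fin e => C.orderEmbOfFin hC c) j : Fin (e + 1) → Fin n) x := by
      intro x
      rcases Fin.eq_castSucc_or_eq_last x with ⟨x', rfl⟩ | rfl
      · rw [hπcast, Fin.snoc_castSucc]
        exact congrFun hfs x'
      · rw [hπlast, Fin.snoc_last]
        exact hfp
    have hupdate : (M.submatrix id g).updateCol (Fin.last e) (fun r => M r j)
        = M.submatrix id (Fin.snoc (fun c : Fin e => C.orderEmbOfFin hC c) j) := by
      ext r c
      rcases Fin.eq_castSucc_or_eq_last c with ⟨c', rfl⟩ | rfl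
      · rw [Matrix.updateCol_apply, if_neg (Fin.castSucc_lt_last c').ne]
        simp [hgdef, Fin.snoc_castSucc]
      · rw [Matrix.updateCol_apply, if_pos rfl]
        simp [Fin.snoc_last]
    have hdetperm : (M.submatrix id (Fin.snoc (fun c : Fin e => C.orderEmbOfFin hC c) j)).det
        = ((Equiv.Perm.sign π : ℤ) : K) * (M.submatrix id (fun x => fj x)).det := by
      have h1 : M.submatrix id (Fin.snoc (fun c : Fin e => C.orderEmbOfFin hC c) j)
          = (M.submatrix id (fun x => fj x)).submatrix id π := by
        ext r c
        simp [Matrix.submatrix_apply, hπ]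
      rw [h1, Matrix.det_permute']
    have hsign : ((Equiv.Perm.sign π : ℤ) : K) = (-1 : K) ^ (e - (p : ℕ)) := by
      have h1 : Equiv.Perm.sign π = Equiv.Perm.sign (Fin.cycleRange p.rev) := by
        rw [hπdef, _root_.map_mul, _root_.map_mul, map_inv, Int.units_inv_eq_self]
        rw [mul_comm (Equiv.Perm.sign (Fin.revPerm : Equiv.Perm (Fin (e+1))))]
        rw [mul_assoc, ← sq, Int.units_sq, mul_one]
      rw [h1, Fin.sign_cycleRange]
      have h2 : ((p.rev : Fin (e + 1)) : ℕ) = e - (p : ℕ) := by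
        rw [Fin.val_rev]
        omega
      rw [h2]
      push_cast
      ring
    have hminorC : minor M (insert j C) = (M.submatrix id (fun x => fj x)).det :=
      minor_eq_det _ _ hins _ fj.strictMono (fun x => Finset.orderEmbOfFin_mem _ hins x)
    -- value of p
    have hpval : (p : ℕ) = (A.filter (· ≤ j)).card := by
      have himg : (insert j C).filter (· < j) = (Finset.Iio p).image fj := by
        ext x
        simp only [Finset.mem_filter, Finset.mem_image, Finset.mem_Iio]
        constructor
        · rintro ⟨hx1, hx2⟩
          obtain ⟨q, hq⟩ : ∃ q, fj q = x := by
            have hrange := Finset.range_orderEmbOfFin (insert j C) hins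
            have hmem : x ∈ Set.range (fun q => fj q) := by
              rw [show Set.range (fun q => fj q) = Set.range ((insert j C).orderEmbOfFin hins)
                from rfl, hrange]
              exact_mod_cast hx1
            exact hmem
          refine ⟨q, ?_, hq⟩
          rw [← fj.strictMono.lt_iff_lt, hq, hfp]
          exact hx2
        · rintro ⟨q, hq1, rfl⟩
          refine ⟨Finset.orderEmbOfFin_mem _ hins q, ?_⟩
          rw [← hfp]
          exact fj.strictMono hq1
      have hfilter : (insert j C).filter (· < j) = A.filter (· ≤ j) := by
        ext x
        simp only [Finset.mem_filter, Finset.mem_insert]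
        constructor
        · rintro ⟨h1 | h1, h2⟩
          · exact absurd h2 (by simp [h1])
          · obtain ⟨hxb, hxS⟩ := Finset.mem_erase.mp h1
            rcases Finset.mem_union.mp hxS with h3 | h3
            · exact ⟨h3, le_of_lt h2⟩
            · exfalso
              have h4 := hBv x h3
              have h5 : (x : ℕ) < (j : ℕ) := h2
              have := k.isLt
              rw [hjval] at h5
              omega
        · rintro ⟨h1, h2⟩
          have hxj : x ≠ j := fun h => hkA (h ▸ h1)
          refine ⟨Or.inr (Finset.mem_erase.mpr ⟨?_, Finset.mem_union_left _ h1⟩),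
            lt_of_le_of_ne h2 hxj⟩
          intro h
          have := hAv x h1
          rw [h] at this
          omega
      rw [← hfilter, himg, Finset.card_image_of_injective _ fj.injective, Fin.card_Iio]
    -- the q-factor
    have hjP : j ∈ P := Finset.mem_filter.mpr ⟨Finset.mem_univ _, by
      rw [hjval]; exact k.isLt⟩
    have hPcard : P.card = e + 1 + 1 := by
      have himg : P = Finset.univ.image (Fin.castLE hdn) := by
        ext x
        simp only [hPdef, Finset.mem_filter, Finset.mem_univ, true_and, Finset.mem_image]
        constructor
        · intro hx
          exact ⟨⟨(x : ℕ), hx⟩, by ext; simp⟩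
        · rintro ⟨y, -, rfl⟩
          simpa using y.isLt
      rw [himg, Finset.card_image_of_injective _ (Fin.castLE_injective hdn)]
      simp
    have hbnP : b ∉ P.erase j := fun h => by
      have := (Finset.mem_filter.mp (Finset.mem_erase.mp h).2).2
      omega
    have hQcard : (insert b (P.erase j)).card = e + 1 + 1 := by
      rw [Finset.card_insert_of_notMem hbnP, Finset.card_erase_of_mem hjP, hPcard]
      omega
    set qf : Fin (e + 1 + 1) → Fin n :=
      Fin.snoc (fun c : Fin (e + 1) => Fin.castLE hdn (k.succAbove c)) b with hqf
    have hqmono : StrictMono qf := by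
      intro x y hxy
      rcases Fin.eq_castSucc_or_eq_last y with ⟨y', rfl⟩ | rfl
      · obtain ⟨x', rfl⟩ := Fin.exists_castSucc_eq.mpr
          (Fin.ne_last_of_lt (lt_trans hxy (Fin.castSucc_lt_last y')))
        simp only [hqf, Fin.snoc_castSucc]
        rw [Fin.lt_def]
        simp only [Fin.coe_castLE]
        exact (Fin.strictMono_succAbove k) (Fin.castSucc_lt_castSucc_iff.mp hxy)
      · obtain ⟨x', rfl⟩ := Fin.exists_castSucc_eq.mpr (Fin.ne_last_of_lt hxy)
        simp only [hqf, Fin.snoc_castSucc, Fin.snoc_last]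
        rw [Fin.lt_def]
        simp only [Fin.coe_castLE]
        have := (k.succAbove x').isLt
        omega
    have hqmem : ∀ x, qf x ∈ insert b (P.erase j) := by
      intro x
      rcases Fin.eq_castSucc_or_eq_last x with ⟨x', rfl⟩ | rfl
      · simp only [hqf, Fin.snoc_castSucc]
        refine Finset.mem_insert_of_mem (Finset.mem_erase.mpr ⟨?_, ?_⟩)
        · intro h
          exact Fin.succAbove_ne k x' (Fin.castLE_injective hdn h)
        · exact Finset.mem_filter.mpr ⟨Finset.mem_univ _, by
            simpa using (k.succAbove x').isLt⟩
      · simp only [hqf, Fin.snoc_last]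
        exact Finset.mem_insert_self _ _
    have hQ : minor W (insert b (P.erase j)) = (-1 : K) ^ ((k : ℕ) + (e + 1)) * W k b := by
      rw [minor_eq_det _ _ hQcard _ hqmono hqmem,
        Matrix.det_succ_column _ (Fin.last (e + 1))]
      have hz : ∀ r : Fin (e + 1 + 1), r ≠ k →
          (-1 : K) ^ ((r : ℕ) + ((Fin.last (e + 1) : Fin (e + 1 + 1)) : ℕ)) *
            (W.submatrix id qf) r (Fin.last (e + 1)) *
            ((W.submatrix id qf).submatrix r.succAbove
              (Fin.last (e + 1)).succAbove).det = 0 := by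
        intro r hr
        obtain ⟨c₁, hc₁⟩ := Fin.exists_succAbove_eq (Ne.symm hr)
        have hzero : ((W.submatrix id qf).submatrix r.succAbove
            (Fin.last (e + 1)).succAbove).det = 0 := by
          apply Matrix.det_eq_zero_of_row_eq_zero c₁
          intro c
          rw [Matrix.submatrix_apply, Matrix.submatrix_apply, id_eq,
            Fin.succAbove_last, hc₁]
          simp only [hqf, Fin.snoc_castSucc]
          rw [hid _ _ (by simpa using (k.succAbove c).isLt)]
          rw [if_neg]
          simp only [Fin.coe_castLE]
          exact fun h => (Fin.succAbove_ne k c) (Fin.val_injective h).symm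
        rw [hzero, mul_zero]
      rw [Fintype.sum_eq_single k hz]
      have hone : (W.submatrix id qf).submatrix k.succAbove
          (Fin.last (e + 1)).succAbove = 1 := by
        ext r c
        rw [Matrix.submatrix_apply, Matrix.submatrix_apply, id_eq, Fin.succAbove_last]
        simp only [hqf, Fin.snoc_castSucc]
        rw [hid _ _ (by simpa using (k.succAbove c).isLt)]
        simp only [Fin.coe_castLE]
        by_cases h : r = c
        · subst h
          simp [Matrix.one_apply]
        · rw [if_neg, Matrix.one_apply_ne h]
          intro hvv
          exact h (Fin.succAbove_right_injective (Fin.val_injective hvv))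
      rw [hone, Matrix.det_one, mul_one]
      simp only [Matrix.submatrix_apply, id_eq, hqf, Fin.snoc_last, Fin.val_last]
    -- put everything together
    rw [hupdate, hdetperm, hsign, hQ, ← hminorC, ← hpval]
    rw [show ((-1 : K) ^ (e - (p : ℕ)))
        = (-1 : K) ^ ((j : ℕ) + 1 + (p : ℕ)) * (-1 : K) ^ ((k : ℕ) + (e + 1)) from by
      rw [← pow_add]
      refine neg_one_pow_congr_aux ?_
      have := p.isLt
      rw [hjval]
      omega]
    ring
  -- assembling
  rw [hLHS, hexp]
  rw [← Finset.sum_filter_of_ne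
    (p := fun k : Fin (e + 1 + 1) => k ≠ i ∧ Fin.castLE hdn k ∉ A)
    (by
      intro k _ hne
      by_contra h
      push_neg at h
      rcases Decidable.em (k = i) with h1 | h1
      · exact hne (hzero k (Or.inl h1))
      · exact hne (hzero k (Or.inr (h h1))))]
  refine Finset.sum_bij' (fun k _ => Fin.castLE hdn k)
    (fun j hj => ⟨(j : ℕ), by
      have := (Finset.mem_filter.mp (Finset.mem_sdiff.mp hj).1).2
      omega⟩) ?_ ?_ ?_ ?_ ?_
  · intro k hk
    have hk' := Finset.mem_filter.mp hk
    have hki := hk'.2.1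
    have hkA := hk'.2.2
    refine Finset.mem_sdiff.mpr ⟨Finset.mem_filter.mpr ⟨Finset.mem_univ _, by
      simpa using k.isLt⟩, ?_⟩
    intro hmem
    rcases Finset.mem_insert.mp hmem with h1 | h1
    · exact hki (Fin.castLE_injective hdn h1)
    · exact hkA h1
  · intro j hj
    have hj' := Finset.mem_sdiff.mp hj
    have hjni := hj'.2
    refine Finset.mem_filter.mpr ⟨Finset.mem_univ _, ?_, ?_⟩
    · intro h1
      apply hjni
      have hji : j = Fin.castLE hdn i := by
        ext
        simpa using congrArg Fin.val h1
      exact hji ▸ Finset.mem_insert_self _ _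
    · intro h1
      exact hjni (Finset.mem_insert_of_mem (by simpa using h1))
  · intro k hk
    ext
    simp
  · intro j hj
    ext
    simp
  · intro k hk
    have hk' := Finset.mem_filter.mp hk
    exact hterm k hk'.2.1 hk'.2.2
end

section
/- In the matroid $\tilde\Dil_{n-2}(U_{n,n})$ on ground set $\binom{[n]}{2}$ (for $n \ge 4$), every circuit has size $3$ or $4$: there are no circuits of size $1$, $2$, or of size $\ge 5$. Moreover, a $4$-element subset of $\binom{[n]}{2}$ is a circuit if and only if it contains no $3$-element subset of the form $\{\{a,a_1\},\{a,a_2\},\{a,a_3\}\}$. -/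
open Finset

variable {n : ℕ}

/-- Independence in the relabeled Dilworth truncation `Dil~_{n-2}(U_{n,n})`: a family
of `2`-subsets of `[n]` is independent iff every nonempty `s`-element subfamily
`{J_1,…,J_s}` satisfies `|J_1ᶜ ∪ ⋯ ∪ J_sᶜ| ≥ s + n - 3`. -/
def DilIndep (F : Finset (Finset (Fin n))) : Prop :=
  ∀ G ⊆ F, G.Nonempty → G.card + n ≤ (G.sup (fun J => Jᶜ)).card + 3

/-- Circuits: minimal dependent sets. -/
def DilCircuit (C : Finset (Finset (Fin n))) : Prop :=
  ¬ DilIndep C ∧ ∀ D ⊂ C, DilIndep D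

lemma dil_sup_compl_eq (G : Finset (Finset (Fin n))) :
    (G.sup (fun J => Jᶜ)) = (G.inf id)ᶜ := by
  ext x
  simp only [Finset.mem_sup, Finset.mem_compl, Finset.mem_inf, id_eq, not_forall]
  tauto

lemma dil_indep_iff (F : Finset (Finset (Fin n))) :
    DilIndep F ↔ ∀ G ⊆ F, G.Nonempty → G.card + (G.inf id).card ≤ 3 := by
  unfold DilIndep
  refine forall₂_congr (fun G hG => ?_)
  refine imp_congr Iff.rfl ?_
  rw [dil_sup_compl_eq, Finset.card_compl, Fintype.card_fin]
  have h := Finset.card_le_univ (G.inf id)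
  rw [Fintype.card_fin] at h
  omega

lemma dil_indep_char (F : Finset (Finset (Fin n))) (h2 : ∀ J ∈ F, J.card = 2) :
    DilIndep F ↔ F.card ≤ 3 ∧
      ∀ D ⊆ F, D.card = 3 → ¬ ∃ a : Fin n, ∀ J ∈ D, a ∈ J := by
  rw [dil_indep_iff]
  constructor
  · intro h
    constructor
    · rcases F.eq_empty_or_nonempty with rfl | hne
      · simp
      · have := h F (subset_refl F) hne
        omega
    · rintro D hD hD3 ⟨a, ha⟩
      have hDne : D.Nonempty := Finset.card_pos.mp (by omega)
      have haI : a ∈ D.inf id := Finset.mem_inf.mpr (by simpa using ha)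
      have : 1 ≤ (D.inf id).card := Finset.card_pos.mpr ⟨a, haI⟩
      have := h D hD hDne
      omega
  · rintro ⟨hc, hP⟩ G hG hne
    obtain ⟨J, hJ⟩ := hne
    have hsub : G.inf id ⊆ J := Finset.le_iff_subset.mp (Finset.inf_le hJ)
    have hJ2 : J.card = 2 := h2 J (hG hJ)
    have hinf2 : (G.inf id).card ≤ 2 := hJ2 ▸ Finset.card_le_card hsub
    have hGc : G.card ≤ 3 := le_trans (Finset.card_le_card hG) hc
    have hG1 : 1 ≤ G.card := Finset.card_pos.mpr ⟨J, hJ⟩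
    -- case on G.card
    by_cases h3 : G.card = 3
    · have : G.inf id = ∅ := by
        by_contra hne'
        obtain ⟨a, ha⟩ := Finset.nonempty_of_ne_empty hne'
        exact hP G hG h3 ⟨a, fun K hK => by simpa using Finset.mem_inf.mp ha K hK⟩
      rw [this, Finset.card_empty]
      omega
    · by_cases h2' : G.card ≤ 1
      · omega
      · -- G.card = 2
        obtain ⟨K, hK, L, hL, hKL⟩ := Finset.one_lt_card.mp (show 1 < G.card by omega)
        have hsubK : G.inf id ⊆ K := Finset.le_iff_subset.mp (Finset.inf_le hK)
        have hsubL : G.inf id ⊆ L := Finset.le_iff_subset.mp (Finset.inf_le hL)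
        have hsubKL : G.inf id ⊆ K ∩ L := Finset.subset_inter hsubK hsubL
        have hKL1 : (K ∩ L).card ≤ 1 := by
          by_contra hcon
          have hK2 : K.card = 2 := h2 K (hG hK)
          have hL2 : L.card = 2 := h2 L (hG hL)
          have h1 : K ∩ L = K := Finset.eq_of_subset_of_card_le
            Finset.inter_subset_left (by omega)
          have h2'' : K ∩ L = L := Finset.eq_of_subset_of_card_le
            Finset.inter_subset_right (by omega)
          exact hKL (h1 ▸ h2'')
        have := le_trans (Finset.card_le_card hsubKL) hKL1
        omega

/-- in `Dil~_{n-2}(U_{n,n})` (for `n ≥ 4`), every circuit has size `3`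
or `4`, and a `4`-element subset is a circuit iff it contains no `3`-element subset of
the form `{{a,a₁},{a,a₂},{a,a₃}}` (i.e. no three members sharing a common element). -/
theorem circuits_of_relabeled_dilworth_size (hn : 4 ≤ n) :
    (∀ C : Finset (Finset (Fin n)), (∀ J ∈ C, J.card = 2) → DilCircuit C →
      C.card = 3 ∨ C.card = 4) ∧
    (∀ C : Finset (Finset (Fin n)), (∀ J ∈ C, J.card = 2) → C.card = 4 →
      (DilCircuit C ↔
        ¬ ∃ D ⊆ C, D.card = 3 ∧ ∃ a : Fin n, ∀ J ∈ D, a ∈ J)) := by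
  constructor
  · rintro C h2 ⟨hdep, hmin⟩
    have hge3 : 3 ≤ C.card := by
      by_contra hlt
      apply hdep
      rw [dil_indep_char C h2]
      refine ⟨by omega, fun D hD hD3 _ => ?_⟩
      have := Finset.card_le_card hD
      omega
    have hle4 : C.card ≤ 4 := by
      by_contra hgt
      obtain ⟨D, hDC, hD4⟩ := Finset.exists_subset_card_eq (s := C) (n := 4) (by omega)
      have hss : D ⊂ C := Finset.ssubset_iff_subset_ne.mpr
        ⟨hDC, fun h => by rw [h] at hD4; omega⟩
      have hind := hmin D hss
      have := ((dil_indep_char D (fun J hJ => h2 J (hDC hJ))).mp hind).1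
      omega
    omega
  · intro C h2 hc4
    constructor
    · rintro ⟨hdep, hmin⟩ ⟨D, hDC, hD3, a, ha⟩
      have hss : D ⊂ C := Finset.ssubset_iff_subset_ne.mpr
        ⟨hDC, fun h => by rw [h] at hD3; omega⟩
      have hind := hmin D hss
      exact ((dil_indep_char D (fun J hJ => h2 J (hDC hJ))).mp hind).2
        D (subset_refl D) hD3 ⟨a, ha⟩
    · intro hno
      constructor
      · intro h
        have := ((dil_indep_char C h2).mp h).1
        omega
      · intro D hD
        rw [dil_indep_char D (fun J hJ => h2 J (hD.subset hJ))]
        constructor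
        · have := Finset.card_lt_card hD
          omega
        · rintro E hE hE3 ⟨a, ha⟩
          exact hno ⟨E, hE.trans hD.subset, hE3, a, ha⟩
end
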